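/- The gauging map preserves symmetric eigenstates: (a) for every ψ ∈ H_m with X(s)ψ = ψ for all s ∈ S, one has ‖G ψ‖² = (|S| / 2^{|I|}) · ‖ψ‖²; in particular G is injective on the symmetric subspace; and (b) if H is a symmetric operator on H_m and ψ is a symmetric vector with H ψ = λ ψ, then 𝒢[H] (G ψ) = |S| λ · (G ψ), so G maps symmetric eigenvectors of H to eigenvectors of 𝒢[H] with eigenvalue |S|λ. -/

import Mathlib

set_option linter.unusedSectionVars false

noncomputable section

namespace GaugingFractal

/-- The sign `(-1)^t` attached to a `ZMod 2` exponent. -/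
def sgn (t : ZMod 2) : ℂ := (-1 : ℂ) ^ t.val

lemma sgn_mul_self (t : ZMod 2) : sgn t * sgn t = 1 := by
  unfold sgn
  rw [← pow_add, ← two_mul, pow_mul]
  norm_num

lemma zmodfun_add_self {K : Type*} (k : K → ZMod 2) : k + k = 0 := by
  funext j
  exact CharTwo.add_self_eq_zero _

/-- Hilbert space of qubits labelled by a finite set `K`; the computational basis
vector `e_a` is indexed by a pattern `a : K → ZMod 2`. -/
abbrev HS (K : Type*) := EuclideanSpace ℂ (K → ZMod 2)

section Single
variable {K : Type*} [Fintype K] [DecidableEq K]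

/-- Pauli X operator: `X(p) e_a = e_{a+p}`. -/
def XOp (p : K → ZMod 2) : HS K →ₗ[ℂ] HS K where
  toFun ψ := WithLp.toLp 2 <| fun a => ψ (a + p)
  map_add' _ _ := rfl
  map_smul' _ _ := rfl

/-- Pauli Z operator: `Z(p) e_a = (-1)^{Σ_i p i * a i} e_a`. -/
def ZOp (p : K → ZMod 2) : HS K →ₗ[ℂ] HS K where
  toFun ψ := WithLp.toLp 2 <| fun a => sgn (∑ i, p i * a i) * ψ a
  map_add' ψ φ := by
    ext a
    exact mul_add _ _ _
  map_smul' c ψ := by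
    ext a
    simp only [RingHom.id_apply, PiLp.smul_apply, smul_eq_mul]
    ring

end Single

section Pair

variable {I J : Type*} [Fintype I] [DecidableEq I] [Fintype J] [DecidableEq J]

/-- Hilbert space of the matter qubits (labelled by `I`) tensored with the gauge
qubits (labelled by `J`): the computational basis vector indexed by `(a, b)`
realizes the tensor product `e_a ⊗ f_b`. -/
abbrev HS2 (I J : Type*) := EuclideanSpace ℂ ((I → ZMod 2) × (J → ZMod 2))

/-- `X(p) ⊗ X_g(q)` on `H_m ⊗ H_g`. -/
def XXOp (p : I → ZMod 2) (q : J → ZMod 2) : HS2 I J →ₗ[ℂ] HS2 I J where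
  toFun ψ := WithLp.toLp 2 <| fun ab => ψ (ab.1 + p, ab.2 + q)
  map_add' _ _ := rfl
  map_smul' _ _ := rfl

/-- `X(p) ⊗ Z_g(q)` on `H_m ⊗ H_g`. -/
def XZOp (p : I → ZMod 2) (q : J → ZMod 2) : HS2 I J →ₗ[ℂ] HS2 I J where
  toFun ψ := WithLp.toLp 2 <| fun ab => sgn (∑ j, q j * ab.2 j) * ψ (ab.1 + p, ab.2)
  map_add' ψ φ := by
    ext ab
    exact mul_add _ _ _
  map_smul' c ψ := by
    ext ab
    simp only [RingHom.id_apply, PiLp.smul_apply, smul_eq_mul]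
    ring

/-- `Z(p) ⊗ X_g(q)` on `H_m ⊗ H_g`. -/
def ZXOp (p : I → ZMod 2) (q : J → ZMod 2) : HS2 I J →ₗ[ℂ] HS2 I J where
  toFun ψ := WithLp.toLp 2 <| fun ab => sgn (∑ i, p i * ab.1 i) * ψ (ab.1, ab.2 + q)
  map_add' ψ φ := by
    ext ab
    exact mul_add _ _ _
  map_smul' c ψ := by
    ext ab
    simp only [RingHom.id_apply, PiLp.smul_apply, smul_eq_mul]
    ring

/-- The flux operator `1 ⊗ Z_g(k)` on `H_m ⊗ H_g`. -/
def IZOp (k : J → ZMod 2) : HS2 I J →ₗ[ℂ] HS2 I J := XZOp 0 k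

variable (A : J → Finset I)

/-- The boundary map `∂ : (I → ZMod 2) → (J → ZMod 2)`, `(∂p)(j) = Σ_{i ∈ A j} p(i)`. -/
def bnd (p : I → ZMod 2) : J → ZMod 2 := fun j => ∑ i ∈ A j, p i

/-- The coboundary map `δ : (J → ZMod 2) → (I → ZMod 2)`, `(δk)(i) = Σ_{j : i ∈ A j} k(j)`. -/
def cobnd (k : J → ZMod 2) : I → ZMod 2 :=
  fun i => ∑ j ∈ Finset.univ.filter (fun j => i ∈ A j), k j

/-- The indicator pattern `χ_i` of a matter qubit `i`. -/
def chi (i : I) : I → ZMod 2 := Pi.single i 1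

/-- The indicator pattern `κ_j` of a gauge qubit `j`. -/
def kap (j : J) : J → ZMod 2 := Pi.single j 1

/-- The local gauge constraint `C_i = X(χ_i) ⊗ X_g(∂χ_i)`. -/
def C (i : I) : HS2 I J →ₗ[ℂ] HS2 I J := XXOp (chi i) (bnd A (chi i))

lemma XXOp_mul (p p' : I → ZMod 2) (q q' : J → ZMod 2) :
    (XXOp p q : Module.End ℂ (HS2 I J)) * XXOp p' q' = XXOp (p + p') (q + q') := by
  apply LinearMap.ext
  intro ψ
  ext ab
  show ψ (ab.1 + p + p', ab.2 + q + q') = ψ (ab.1 + (p + p'), ab.2 + (q + q'))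
  rw [add_assoc, add_assoc]

lemma C_commute (i i' : I) : Commute (C A i) (C A i') := by
  show C A i * C A i' = C A i' * C A i
  unfold C
  rw [XXOp_mul, XXOp_mul, add_comm (chi i) (chi i'),
    add_comm (bnd A (chi i)) (bnd A (chi i'))]

/-- The product of gauge constraints `C^s = Π_{i : s i = 1} C_i`. -/
def Cprod (s : I → ZMod 2) : Module.End ℂ (HS2 I J) :=
  (Finset.univ.filter fun i => s i = 1).noncommProd (fun i => C A i)
    (fun i _ j _ _ => C_commute A i j)

lemma Chalf_commute (i i' : I) :
    Commute ((2 : ℂ)⁻¹ • (1 + C A i)) ((2 : ℂ)⁻¹ • (1 + C A i')) := by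
  have h : Commute (1 + C A i) (1 + C A i') :=
    (Commute.one_left _).add_left ((Commute.one_right _).add_right (C_commute A i i'))
  exact (h.smul_left _).smul_right _

/-- The projector `P = Π_{i ∈ I} (1 + C_i)/2` onto the gauge invariant subspace. -/
def Pproj : Module.End ℂ (HS2 I J) :=
  Finset.univ.noncommProd (fun i => (2 : ℂ)⁻¹ • (1 + C A i))
    (fun i _ j _ _ => Chalf_commute A i j)

/-- `ψ ↦ ψ ⊗ f_0`, the inclusion `1_m ⊗ |f_0⟩ : H_m → H_m ⊗ H_g` determined by the
all-zeros gauge basis vector `f_0`. -/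
def incl : HS I →ₗ[ℂ] HS2 I J where
  toFun ψ := WithLp.toLp 2 <| fun ab => if ab.2 = 0 then ψ ab.1 else 0
  map_add' ψ φ := by
    ext ab
    by_cases h : ab.2 = 0 <;> simp [h]
  map_smul' c ψ := by
    ext ab
    by_cases h : ab.2 = 0 <;> simp [h]

/-- The compression `1_m ⊗ ⟨f_0| : H_m ⊗ H_g → H_m`. -/
def res0 : HS2 I J →ₗ[ℂ] HS I where
  toFun ψ := WithLp.toLp 2 <| fun a => ψ (a, 0)
  map_add' _ _ := rfl
  map_smul' _ _ := rfl

/-- The state gauging map `G ψ = P (ψ ⊗ f_0)`. -/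
def Gmap : HS I →ₗ[ℂ] HS2 I J := Pproj A ∘ₗ incl

/-- The operator gauging map `𝒢[O] = Σ_{s : I → ZMod 2} C^s (O ⊗ |f_0⟩⟨f_0|) C^s`,
where `O ⊗ |f_0⟩⟨f_0| = incl ∘ O ∘ res0`. -/
def gaugeOp (O : Module.End ℂ (HS I)) : Module.End ℂ (HS2 I J) :=
  ∑ s : I → ZMod 2, Cprod A s * (incl ∘ₗ O ∘ₗ res0) * Cprod A s

/-- The joint fixed subspace `{v | C_i v = v for all i}` of the gauge constraints. -/
def fixedSub : Submodule ℂ (HS2 I J) where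
  carrier := {v | ∀ i, C A i v = v}
  add_mem' := by
    intro x y hx hy i
    rw [map_add, hx i, hy i]
  zero_mem' := by
    intro i
    simp
  smul_mem' := by
    intro c x hx i
    rw [map_smul, hx i]

/-- The symmetric subspace `{ψ | X(s) ψ = ψ for all s with ∂s = 0}` of the matter space. -/
def symmSub : Submodule ℂ (HS I) where
  carrier := {ψ | ∀ s, bnd A s = 0 → XOp s ψ = ψ}
  add_mem' := by
    intro x y hx hy s hs
    rw [map_add, hx s hs, hy s hs]
  zero_mem' := by
    intro s hs
    simp
  smul_mem' := by
    intro c x hx s hs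
    rw [map_smul, hx s hs]

/-- The cluster stabilizer `K_i = X(χ_i) ⊗ Z_g(∂χ_i)`. -/
def Kst (i : I) : Module.End ℂ (HS2 I J) := XZOp (chi i) (bnd A (chi i))

/-- The cluster stabilizer `L_j = Z(δκ_j) ⊗ X_g(κ_j)`. -/
def Lst (j : J) : Module.End ℂ (HS2 I J) := ZXOp (cobnd A (kap j)) (kap j)

/-- The disentangling circuit of controlled-X gates from each matter qubit to its
adjacent gauge qubits: `V (e_a ⊗ f_b) = e_a ⊗ f_{b + ∂a}`. -/
def Vequiv : HS2 I J ≃ₗ[ℂ] HS2 I J where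
  toFun ψ := WithLp.toLp 2 <| fun ab => ψ (ab.1, ab.2 + bnd A ab.1)
  invFun ψ := WithLp.toLp 2 <| fun ab => ψ (ab.1, ab.2 + bnd A ab.1)
  map_add' _ _ := rfl
  map_smul' _ _ := rfl
  left_inv ψ := by
    ext ab
    show ψ (ab.1, ab.2 + bnd A ab.1 + bnd A ab.1) = ψ ab
    rw [add_assoc, zmodfun_add_self, add_zero]
  right_inv ψ := by
    ext ab
    show ψ (ab.1, ab.2 + bnd A ab.1 + bnd A ab.1) = ψ ab
    rw [add_assoc, zmodfun_add_self, add_zero]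

/-- The circuit of controlled-Z gates along the edges of the bipartite graph:
`U (e_a ⊗ f_b) = (-1)^{Σ_j (∂a)(j)·b(j)} e_a ⊗ f_b`. -/
def Uequiv : HS2 I J ≃ₗ[ℂ] HS2 I J where
  toFun ψ := WithLp.toLp 2 <| fun ab => sgn (∑ j, bnd A ab.1 j * ab.2 j) * ψ ab
  invFun ψ := WithLp.toLp 2 <| fun ab => sgn (∑ j, bnd A ab.1 j * ab.2 j) * ψ ab
  map_add' ψ φ := by
    ext ab
    exact mul_add _ _ _
  map_smul' c ψ := by
    ext ab
    simp only [RingHom.id_apply, PiLp.smul_apply, smul_eq_mul]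
    ring
  left_inv ψ := by
    ext ab
    show sgn _ * (sgn _ * ψ ab) = ψ ab
    rw [← mul_assoc, sgn_mul_self, one_mul]
  right_inv ψ := by
    ext ab
    show sgn _ * (sgn _ * ψ ab) = ψ ab
    rw [← mul_assoc, sgn_mul_self, one_mul]

/-!
Multiplying out `P = ∏ᵢ (1 + Cᵢ)/2` gives `P = 2^{-|I|} ∑ₛ Cˢ` with `Cˢ = X(s) ⊗ X_g(∂s)`, hence
`(G ψ)(a, b) = 2^{-|I|} ∑_{∂s = b} ψ(a + s)`. For symmetric `ψ` the summands are constant on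
every fibre of `∂`, a coset of `S`: so `(G ψ)(a, ∂s₀) = (|S| / 2^{|I|}) ψ(a + s₀)`, `G ψ`
vanishes off the image of `∂`, and summing over the `2^{|I|} / |S|` nonempty fibres gives the norm.
For the eigenvalue equation, `Cˢ P = P` makes `G ψ` gauge invariant, so every term of `𝒢[H]`
sees the same compression `⟨f₀| G ψ = (|S| / 2^{|I|}) ψ`, which `H` scales by `λ`, and
`∑ₛ Cˢ (ψ ⊗ f₀) = 2^{|I|} G ψ`.
-/

section GaugingMap

open scoped Finset

theorem _root_.Finset.noncommProd_smul {ι k R : Type*} [CommSemiring k] [Semiring R] [Algebra k R]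
    (c : k) (f : ι → R) (hf : Pairwise fun i j => Commute (f i) (f j)) (T : Finset ι) (comm) :
    T.noncommProd (fun i => c • f i) comm = c ^ T.card • T.noncommProd f (hf.set_pairwise _) := by
  simp_rw [Algebra.smul_def]
  refine (Finset.noncommProd_mul_distrib (fun _ => algebraMap k R c) f
      (fun _ _ _ _ _ => Commute.refl _) (hf.set_pairwise _)
      (fun _ _ _ _ _ => (Algebra.commutes c _).symm)).trans ?_
  congr 1
  exact (Finset.noncommProd_eq_pow_card _ _ _ _ fun _ _ => rfl).trans (map_pow ..).symm

theorem _root_.Finset.noncommProd_one_add {ι R : Type*} [DecidableEq ι] [Semiring R]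
    (f : ι → R) (hf : Pairwise fun i j => Commute (f i) (f j)) (T : Finset ι) (comm) :
    T.noncommProd (fun i => 1 + f i) comm
      = ∑ U ∈ T.powerset, U.noncommProd f (hf.set_pairwise _) := by
  induction T using Finset.cons_induction with
  | empty => simp
  | cons a T ha ih =>
    rw [Finset.noncommProd_cons, ih, Finset.cons_eq_insert, Finset.sum_powerset_insert ha,
      add_mul, one_mul, Finset.mul_sum]
    congr 1
    refine Finset.sum_congr rfl fun U hU => ?_
    rw [Finset.noncommProd_insert_of_notMem _ _ _ _ fun haU => ha (Finset.mem_powerset.mp hU haU)]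

def bndHom : (I → ZMod 2) →+ (J → ZMod 2) where
  toFun := bnd A
  map_zero' := by funext j; simp [bnd]
  map_add' p p' := by funext j; simp [bnd, Finset.sum_add_distrib]

lemma bnd_zero : bnd A (0 : I → ZMod 2) = 0 := map_zero (bndHom A)

lemma bnd_add (p p' : I → ZMod 2) : bnd A (p + p') = bnd A p + bnd A p' :=
  map_add (bndHom A) p p'

lemma XXOp_zero : XXOp (0 : I → ZMod 2) (0 : J → ZMod 2) = 1 := by
  apply LinearMap.ext
  intro ψ
  ext ab
  show ψ (ab.1 + 0, ab.2 + 0) = ψ ab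
  rw [add_zero, add_zero]

lemma noncommProd_C (U : Finset I) :
    U.noncommProd (C A) (fun i _ j _ _ => C_commute A i j)
      = XXOp (∑ i ∈ U, chi i) (bnd A (∑ i ∈ U, chi i)) := by
  induction U using Finset.cons_induction with
  | empty => rw [Finset.sum_empty, bnd_zero, XXOp_zero]; rfl
  | cons a U ha ih =>
    refine (Finset.noncommProd_cons ..).trans ?_
    rw [ih, Finset.sum_cons, C, XXOp_mul, bnd_add]

lemma sum_chi_filter_eq_one (s : I → ZMod 2) : ∑ i with s i = 1, chi i = s := by
  funext i
  simp only [Finset.sum_apply, chi, Pi.single_apply, Finset.sum_ite_eq, Finset.mem_filter,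
    Finset.mem_univ, true_and]
  generalize s i = t
  fin_cases t <;> rfl

lemma Cprod_eq (s : I → ZMod 2) : Cprod A s = XXOp s (bnd A s) := by
  rw [Cprod, noncommProd_C, sum_chi_filter_eq_one]

lemma Cprod_add (s t : I → ZMod 2) : Cprod A (s + t) = Cprod A s * Cprod A t := by
  rw [Cprod_eq, Cprod_eq, Cprod_eq, XXOp_mul, bnd_add]

lemma Cprod_apply (s : I → ZMod 2) (v : HS2 I J) (a : I → ZMod 2) (b : J → ZMod 2) :
    Cprod A s v (a, b) = v (a + s, b + bnd A s) := by
  rw [Cprod_eq]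
  rfl

lemma bijective_filter_eq_one :
    Function.Bijective fun s : I → ZMod 2 => ({i | s i = 1} : Finset I) := by
  refine (Fintype.bijective_iff_injective_and_card _).mpr ⟨?_, ?_⟩
  · exact Function.LeftInverse.injective (g := fun U => ∑ i ∈ U, chi i) sum_chi_filter_eq_one
  · simp

lemma Pproj_eq : Pproj A = ((2 : ℂ) ^ Fintype.card I)⁻¹ • ∑ s : I → ZMod 2, Cprod A s := by
  have hC : Pairwise fun i j => Commute (C A i) (C A j) := fun i j _ => C_commute A i j
  have hC' : Pairwise fun i j => Commute (1 + C A i) (1 + C A j) := fun i j _ =>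
    (Commute.one_right _).add_right ((Commute.one_left _).add_left (C_commute A i j))
  refine (Finset.noncommProd_smul _ _ hC' _ _).trans ?_
  rw [Finset.noncommProd_one_add _ hC, Finset.card_univ, inv_pow, Finset.powerset_univ]
  congr 1
  exact (Fintype.sum_bijective _ bijective_filter_eq_one _ _ fun _ => rfl).symm

lemma Cprod_mul_Pproj (s : I → ZMod 2) : Cprod A s * Pproj A = Pproj A := by
  rw [Pproj_eq, mul_smul_comm, Finset.mul_sum]
  simp_rw [← Cprod_add]
  congr 1
  exact Fintype.sum_equiv (Equiv.addLeft s) _ _ fun _ => rfl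

lemma Gmap_eq_smul_sum (ψ : HS I) :
    Gmap A ψ = ((2 : ℂ) ^ Fintype.card I)⁻¹ • ∑ s : I → ZMod 2, Cprod A s (incl ψ) := by
  rw [Gmap, LinearMap.comp_apply, Pproj_eq, LinearMap.smul_apply, LinearMap.sum_apply]

lemma Cprod_Gmap (s : I → ZMod 2) (ψ : HS I) : Cprod A s (Gmap A ψ) = Gmap A ψ :=
  LinearMap.congr_fun (Cprod_mul_Pproj A s) (incl ψ)

lemma Gmap_apply (ψ : HS I) (a : I → ZMod 2) (b : J → ZMod 2) :
    Gmap A ψ (a, b)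
      = ((2 : ℂ) ^ Fintype.card I)⁻¹ * ∑ s with bnd A s = b, ψ (a + s) := by
  rw [Gmap_eq_smul_sum, PiLp.smul_apply, WithLp.ofLp_sum, Finset.sum_apply, smul_eq_mul,
    Finset.sum_filter]
  congr 1
  refine Finset.sum_congr rfl fun s _ => ?_
  rw [Cprod_apply]
  exact if_congr (by rw [add_eq_zero_iff_eq_neg, ZModModule.neg_eq_self, eq_comm]) rfl rfl

lemma apply_add_of_mem_symmSub {ψ : HS I} (hψ : ψ ∈ symmSub A) {s : I → ZMod 2}
    (hs : bnd A s = 0) (a : I → ZMod 2) : ψ (a + s) = ψ a :=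
  congrArg (fun v : HS I => v a) (hψ s hs)

lemma card_filter_bnd_eq (s₀ : I → ZMod 2) :
    #{s | bnd A s = bnd A s₀} = #{s | bnd A s = 0} :=
  AddMonoidHom.card_fiber_eq_of_mem_range (bndHom A) ⟨s₀, rfl⟩ ⟨0, map_zero _⟩

lemma sum_filter_bnd_apply_add {ψ : HS I} (hψ : ψ ∈ symmSub A) (s₀ a : I → ZMod 2) :
    ∑ s with bnd A s = bnd A s₀, ψ (a + s) = #{s | bnd A s = 0} * ψ (a + s₀) := by
  have hconst : ∀ s ∈ ({s | bnd A s = bnd A s₀} : Finset _), ψ (a + s) = ψ (a + s₀) := by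
    intro s hs
    have hs₀s : bnd A (s₀ + s) = 0 := by
      rw [bnd_add, (Finset.mem_filter.mp hs).2, ZModModule.add_self]
    rw [← apply_add_of_mem_symmSub A hψ hs₀s (a + s₀), ZModModule.add_add_add_cancel]
  rw [Finset.sum_congr rfl hconst, Finset.sum_const, card_filter_bnd_eq, nsmul_eq_mul]

lemma Gmap_apply_bnd {ψ : HS I} (hψ : ψ ∈ symmSub A) (a s₀ : I → ZMod 2) :
    Gmap A ψ (a, bnd A s₀)
      = ((2 : ℂ) ^ Fintype.card I)⁻¹ * #{s | bnd A s = 0} * ψ (a + s₀) := by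
  rw [Gmap_apply, sum_filter_bnd_apply_add A hψ, mul_assoc]

lemma res0_Gmap {ψ : HS I} (hψ : ψ ∈ symmSub A) :
    res0 (Gmap A ψ) = (((2 : ℂ) ^ Fintype.card I)⁻¹ * #{s | bnd A s = 0}) • ψ := by
  ext a
  have h := Gmap_apply_bnd A hψ a 0
  rw [bnd_zero, add_zero] at h
  exact h

lemma gaugeOp_Gmap {H : Module.End ℂ (HS I)} {ψ : HS I} {lam : ℂ} (hψ : ψ ∈ symmSub A)
    (hHψ : H ψ = lam • ψ) :
    gaugeOp A H (Gmap A ψ) = (#{s | bnd A s = 0} * lam) • Gmap A ψ := by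
  have h2 : (2 : ℂ) ^ Fintype.card I ≠ 0 := pow_ne_zero _ two_ne_zero
  have hsum : ∑ s, Cprod A s (incl ψ) = (2 : ℂ) ^ Fintype.card I • Gmap A ψ := by
    rw [Gmap_eq_smul_sum, smul_smul, mul_inv_cancel₀ h2, one_smul]
  calc gaugeOp A H (Gmap A ψ)
      = ∑ s, Cprod A s (incl (H (res0 (Gmap A ψ)))) := by
        simp only [gaugeOp, LinearMap.sum_apply, Module.End.mul_apply, LinearMap.comp_apply,
          Cprod_Gmap]
    _ = (((2 : ℂ) ^ Fintype.card I)⁻¹ * #{s | bnd A s = 0} * lam) • ∑ s, Cprod A s (incl ψ) := by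
        simp only [res0_Gmap A hψ, map_smul, hHψ, smul_smul, Finset.smul_sum]
    _ = (#{s | bnd A s = 0} * lam) • Gmap A ψ := by
        rw [hsum, smul_smul]
        congr 1
        field_simp

lemma sum_norm_sq_Gmap_apply {ψ : HS I} (hψ : ψ ∈ symmSub A) (b : J → ZMod 2) :
    ∑ a, ‖Gmap A ψ (a, b)‖ ^ 2 = #{s | bnd A s = b}
      * ((#{s | bnd A s = 0} : ℝ) / ((2 : ℝ) ^ Fintype.card I) ^ 2 * ‖ψ‖ ^ 2) := by
  rcases (Finset.univ.filter fun s => bnd A s = b).eq_empty_or_nonempty with hb | ⟨s₀, hs₀⟩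
  · simp [Gmap_apply, hb]
  obtain rfl : bnd A s₀ = b := (Finset.mem_filter.mp hs₀).2
  have hshift : ∑ a, ‖ψ (a + s₀)‖ ^ 2 = ∑ a, ‖ψ a‖ ^ 2 :=
    Fintype.sum_equiv (Equiv.addRight s₀) _ _ fun _ => rfl
  simp only [Gmap_apply_bnd A hψ, norm_mul, norm_inv, norm_pow, Complex.norm_natCast,
    Complex.norm_ofNat, mul_pow, ← Finset.mul_sum, hshift, card_filter_bnd_eq,
    EuclideanSpace.norm_sq_eq]
  ring

lemma norm_sq_Gmap {ψ : HS I} (hψ : ψ ∈ symmSub A) :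
    ‖Gmap A ψ‖ ^ 2 = (#{s | bnd A s = 0} / 2 ^ Fintype.card I : ℝ) * ‖ψ‖ ^ 2 := by
  have hfibres : ∑ b : J → ZMod 2, (#{s | bnd A s = b} : ℝ) = 2 ^ Fintype.card I := by
    rw [← Nat.cast_sum, ← Finset.card_eq_sum_card_fiberwise fun s _ => Finset.mem_univ (bnd A s),
      Finset.card_univ, Fintype.card_fun, ZMod.card]
    push_cast
    rfl
  rw [EuclideanSpace.norm_sq_eq, Fintype.sum_prod_type, Finset.sum_comm]
  simp only [sum_norm_sq_Gmap_apply A hψ, ← Finset.sum_mul, hfibres]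
  field_simp

lemma Gmap_injOn : Set.InjOn (Gmap A) (symmSub A) := by
  intro ψ hψ φ hφ h
  have hN : (0 : ℝ) < #{s | bnd A s = 0} :=
    Nat.cast_pos.mpr (Finset.card_pos.mpr ⟨0, by simp [bnd_zero]⟩)
  have hnorm := norm_sq_Gmap A (sub_mem hψ hφ)
  rw [map_sub, h, sub_self, norm_zero, eq_comm] at hnorm
  have : ‖ψ - φ‖ = 0 := by
    simpa [hN.ne', (by positivity : (0 : ℝ) < 2 ^ Fintype.card I).ne'] using hnorm
  exact sub_eq_zero.mp (norm_eq_zero.mp this)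

end GaugingMap

/-- (a) For symmetric `ψ`, `‖G ψ‖² = (|S| / 2^{|I|}) ‖ψ‖²`; in particular
`G` is injective on the symmetric subspace. (b) If `H` is symmetric and `ψ` is a symmetric
eigenvector with `H ψ = λ ψ`, then `𝒢[H] (G ψ) = |S| λ · (G ψ)`. -/
theorem Gmap_preserves_eigenstates (A : J → Finset I) :
    (∀ ψ : HS I, (∀ s : I → ZMod 2, bnd A s = 0 → XOp s ψ = ψ) →
      ‖Gmap A ψ‖ ^ 2
        = ((Nat.card {s : I → ZMod 2 // bnd A s = 0} : ℝ) / 2 ^ Fintype.card I) * ‖ψ‖ ^ 2)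
    ∧ (∀ ψ φ : HS I, (∀ s : I → ZMod 2, bnd A s = 0 → XOp s ψ = ψ) →
        (∀ s : I → ZMod 2, bnd A s = 0 → XOp s φ = φ) →
        Gmap A ψ = Gmap A φ → ψ = φ)
    ∧ (∀ (H : Module.End ℂ (HS I)) (ψ : HS I) (lam : ℂ),
        (∀ s : I → ZMod 2, bnd A s = 0 → H * XOp s = XOp s * H) →
        (∀ s : I → ZMod 2, bnd A s = 0 → XOp s ψ = ψ) →
        H ψ = lam • ψ →
        gaugeOp A H (Gmap A ψ)
          = ((Nat.card {s : I → ZMod 2 // bnd A s = 0} : ℂ) * lam) • Gmap A ψ) := by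
  have hS : Nat.card {s : I → ZMod 2 // bnd A s = 0} = (Finset.univ.filter (bnd A · = 0)).card :=
    Nat.card_eq_fintype_card.trans (Fintype.card_subtype _)
  refine ⟨fun ψ hψ => ?_, fun ψ φ hψ hφ h => Gmap_injOn A hψ hφ h, fun H ψ lam _ hψ hHψ => ?_⟩
  · rw [hS]
    exact norm_sq_Gmap A hψ
  · rw [hS]
    exact gaugeOp_Gmap A hψ hHψ

end Pair

end GaugingFractal
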